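/- If n and m are positive integers with δ(n) = δ(m) and n is stable, then m is stable. -/
import Mathlib


/-- `CanWrite n k` means the positive integer `n` can be written using exactly `k` ones
combined by addition and multiplication. -/
inductive CanWrite : ℕ → ℕ → Prop
  | one : CanWrite 1 1
  | add {a b j k : ℕ} : CanWrite a j → CanWrite b k → CanWrite (a + b) (j + k)
  | mul {a b j k : ℕ} : CanWrite a j → CanWrite b k → CanWrite (a * b) (j + k)

/-- The integer complexity `‖n‖`: the least number of ones needed to write `n`. -/
noncomputable def cpx (n : ℕ) : ℕ := sInf {k | CanWrite n k}

/-- The defect `δ(n) = ‖n‖ - 3 log₃ n`. -/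
noncomputable def defect (n : ℕ) : ℝ := (cpx n : ℝ) - 3 * Real.logb 3 n

/-- `n` is stable if `‖3^k n‖ = 3k + ‖n‖` for all `k ≥ 0`. -/
def Stable (n : ℕ) : Prop := ∀ k : ℕ, cpx (3 ^ k * n) = 3 * k + cpx n

/-- The stabilization length `K(n)`: the least `k` such that `3^k n` is stable. -/
noncomputable def stabLen (n : ℕ) : ℕ := sInf {k | Stable (3 ^ k * n)}

/-- The stable complexity `‖n‖_st`: equal to `‖3^k n‖ - 3k` for any `k` with `3^k n` stable. -/
noncomputable def stableCpx (n : ℕ) : ℕ :=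
  sInf {m | ∃ k : ℕ, Stable (3 ^ k * n) ∧ cpx (3 ^ k * n) = m + 3 * k}

/-- The stable defect `δ_st(n) = ‖n‖_st - 3 log₃ n`. -/
noncomputable def stableDefect (n : ℕ) : ℝ := (stableCpx n : ℝ) - 3 * Real.logb 3 n

lemma canWrite_exists : ∀ n : ℕ, 0 < n → ∃ k, CanWrite n k := by
  intro n hn
  induction n with
  | zero => omega
  | succ p ih =>
    rcases Nat.eq_zero_or_pos p with hp | hp
    · exact ⟨1, hp ▸ CanWrite.one⟩
    · obtain ⟨k, hk⟩ := ih hp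
      exact ⟨k + 1, hk.add CanWrite.one⟩

lemma cpx_canWrite {n : ℕ} (hn : 0 < n) : CanWrite n (cpx n) :=
  Nat.sInf_mem (canWrite_exists n hn)

lemma cpx_le {n k : ℕ} (h : CanWrite n k) : cpx n ≤ k := Nat.sInf_le h

lemma canWrite_three : CanWrite 3 3 := by
  have := (CanWrite.one.add CanWrite.one).add CanWrite.one
  simpa using this

lemma cpx_pow_mul_le {x : ℕ} (hx : 0 < x) (k : ℕ) : cpx (3 ^ k * x) ≤ 3 * k + cpx x := by
  induction k with
  | zero => simp
  | succ j ih =>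
    have h1 : CanWrite (3 ^ (j + 1) * x) (3 + cpx (3 ^ j * x)) := by
      have := canWrite_three.mul (cpx_canWrite (n := 3 ^ j * x) (by positivity))
      have he : 3 ^ (j + 1) * x = 3 * (3 ^ j * x) := by ring
      rw [he]; exact this
    calc cpx (3 ^ (j + 1) * x) ≤ 3 + cpx (3 ^ j * x) := cpx_le h1
    _ ≤ 3 + (3 * j + cpx x) := by omega
    _ = 3 * (j + 1) + cpx x := by ring

/-- If `n = 3^a * m` and `cpx n = cpx m + 3a`, stability transfers from `n` to `m`. -/
lemma stable_down {n m a : ℕ} (hm : 0 < m) (hnm : n = 3 ^ a * m)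
    (hc : cpx n = cpx m + 3 * a) (hs : Stable n) : Stable m := by
  intro k
  have hle : cpx (3 ^ k * m) ≤ 3 * k + cpx m := cpx_pow_mul_le hm k
  have h1 : 3 ^ k * n = 3 ^ a * (3 ^ k * m) := by rw [hnm]; ring
  have h2 : cpx (3 ^ a * (3 ^ k * m)) ≤ 3 * a + cpx (3 ^ k * m) :=
    cpx_pow_mul_le (by positivity) a
  have h3 : cpx (3 ^ k * n) = 3 * k + cpx n := hs k
  rw [h1] at h3
  omega

theorem stable_of_defect_eq (n m : ℕ) (hn : 0 < n) (hm : 0 < m)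
    (h : defect n = defect m) (hs : Stable n) : Stable m := by
  -- From the defect equality derive `3 ^ cpx n * m ^ 3 = 3 ^ cpx m * n ^ 3`.
  unfold defect at h
  have hL : Real.log 3 ≠ 0 := ne_of_gt (Real.log_pos (by norm_num))
  rw [Real.logb, Real.logb] at h
  have hlog : Real.log ((3 : ℝ) ^ cpx n * (m : ℝ) ^ 3)
      = Real.log ((3 : ℝ) ^ cpx m * (n : ℝ) ^ 3) := by
    rw [Real.log_mul (by positivity) (by positivity),
        Real.log_mul (by positivity) (by positivity),
        Real.log_pow, Real.log_pow, Real.log_pow, Real.log_pow]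
    field_simp at h
    push_cast
    linarith
  have hR := Real.log_injOn_pos (Set.mem_Ioi.2 (by positivity))
    (Set.mem_Ioi.2 (by positivity)) hlog
  have key : 3 ^ cpx n * m ^ 3 = 3 ^ cpx m * n ^ 3 := by
    have : ((3 ^ cpx n * m ^ 3 : ℕ) : ℝ) = ((3 ^ cpx m * n ^ 3 : ℕ) : ℝ) := by
      push_cast; exact hR
    exact_mod_cast this
  -- Compare 3-adic valuations.
  have h3 : Nat.Prime 3 := by norm_num
  have hfact : cpx n + 3 * m.factorization 3 = cpx m + 3 * n.factorization 3 := by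
    have := congrArg (fun x => x.factorization 3) key
    simpa [Nat.factorization_mul (pow_ne_zero _ (by norm_num : (3:ℕ) ≠ 0))
        (pow_ne_zero _ hm.ne'),
      Nat.factorization_mul (pow_ne_zero _ (by norm_num : (3:ℕ) ≠ 0))
        (pow_ne_zero _ hn.ne'),
      Nat.factorization_pow, Nat.Prime.factorization h3] using this
  have hpowinj : Function.Injective (fun x : ℕ => x ^ 3) :=
    Nat.pow_left_injective (by norm_num)
  rcases le_total (cpx m) (cpx n) with hcd | hcd
  · -- n = 3^a * m with cpx n = cpx m + 3a
    set a := n.factorization 3 - m.factorization 3 with ha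
    have hc : cpx n = cpx m + 3 * a ∧ n.factorization 3 = m.factorization 3 + a := by omega
    have hnm : n = 3 ^ a * m := by
      have hcube : n ^ 3 = (3 ^ a * m) ^ 3 := by
        have : 3 ^ cpx m * n ^ 3 = 3 ^ cpx m * ((3 ^ a * m) ^ 3) := by
          rw [← key, hc.1]; ring
        exact Nat.eq_of_mul_eq_mul_left (by positivity) this
      exact (hpowinj hcube)
    exact stable_down hm hnm hc.1 hs
  · -- m = 3^a * n with cpx m = cpx n + 3a
    set a := m.factorization 3 - n.factorization 3 with ha
    have hc : cpx m = cpx n + 3 * a ∧ m.factorization 3 = n.factorization 3 + a := by omega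
    have hmn : m = 3 ^ a * n := by
      have hcube : m ^ 3 = (3 ^ a * n) ^ 3 := by
        have : 3 ^ cpx n * m ^ 3 = 3 ^ cpx n * ((3 ^ a * n) ^ 3) := by
          rw [key, hc.1]; ring
        exact Nat.eq_of_mul_eq_mul_left (by positivity) this
      exact (hpowinj hcube)
    -- Stability is direct here.
    intro k
    have he : 3 ^ k * m = 3 ^ (k + a) * n := by rw [hmn]; ring
    rw [he, hs (k + a), hc.1]
    ring
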